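/- arXiv:2001.01782 — 3 statements merged into one kernel-verified Lean document; each statement's English description precedes it below -/
import Mathlib

section
/- Fix real numbers p > 1 and l > 1 and define f : [0,∞) → ℝ by f(s) = s^l for 0 ≤ s ≤ 1 and f(s) = s^{p−1}·ln(s) + 1 for s > 1; set F(s) = ∫₀^s f(t) dt. Then f does not satisfy the Ambrosetti–Rabinowitz condition: for every β > p and every M > 0 there exists s ≥ M such that β·F(s) > f(s)·s. -/
/-!
For `s ≥ 1` everything is explicit: `F s = 1/(l+1) + s^p log s / p - s^p / p^2 + s - (1 - 1/p^2)`
and `f s * s = s^p log s + s`, so `β F s - f s * s` grows like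
`s^p ((β - p)/p · log s - β/p^2)`, which is eventually positive because `β > p` and `log s → ∞`.
-/

open Real Set

theorem continuousOn_rpow_mul_log_add_one (p : ℝ) :
    ContinuousOn (fun t => t ^ (p - 1) * log t + 1) (Ioi 0) := by
  have : ∀ t ∈ Ioi (0 : ℝ), t ≠ 0 := fun t ht => ne_of_gt ht
  fun_prop (disch := assumption)

theorem hasDerivAt_rpow_mul_log_div_sub {p t : ℝ} (hp : p ≠ 0) (ht : 0 < t) :
    HasDerivAt (fun t => t ^ p * log t / p - t ^ p / p ^ 2 + t) (t ^ (p - 1) * log t + 1) t := by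
  have hpow : HasDerivAt (fun t => t ^ p) (p * t ^ (p - 1)) t :=
    hasDerivAt_rpow_const (Or.inl ht.ne')
  refine ((((hpow.mul (hasDerivAt_log ht.ne')).div_const p).sub
    (hpow.div_const (p ^ 2))).add (hasDerivAt_id t)).congr_deriv ?_
  rw [rpow_sub_one ht.ne']
  field_simp
  ring

theorem integral_rpow_mul_log_add_one {p a b : ℝ} (hp : p ≠ 0) (ha : 0 < a) (hb : 0 < b) :
    ∫ t in a..b, (t ^ (p - 1) * log t + 1) =
      (b ^ p * log b / p - b ^ p / p ^ 2 + b) - (a ^ p * log a / p - a ^ p / p ^ 2 + a) := by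
  have hpos : uIcc a b ⊆ Ioi 0 := fun t ht => lt_of_lt_of_le (lt_min ha hb) ht.1
  exact intervalIntegral.integral_eq_sub_of_hasDerivAt
    (fun t ht => hasDerivAt_rpow_mul_log_div_sub hp (hpos ht))
    ((continuousOn_rpow_mul_log_add_one p).mono hpos).intervalIntegrable

section ModelNonlinearity

variable {p l : ℝ} {f : ℝ → ℝ}

theorem eqOn_rpow_of_model
    (hf : ∀ s, 0 ≤ s → f s = if s ≤ 1 then s ^ l else s ^ (p - 1) * log s + 1) :
    EqOn f (fun t => t ^ l) (uIcc 0 1) := by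
  intro t ht
  rw [uIcc_of_le zero_le_one] at ht
  rw [hf t ht.1, if_pos ht.2]

theorem eqOn_rpow_mul_log_add_one_of_model
    (hf : ∀ s, 0 ≤ s → f s = if s ≤ 1 then s ^ l else s ^ (p - 1) * log s + 1) :
    EqOn f (fun t => t ^ (p - 1) * log t + 1) (Ici 1) := by
  intro t (ht : 1 ≤ t)
  rw [hf t (by linarith)]
  split_ifs with h
  · obtain rfl : t = 1 := le_antisymm h ht
    simp
  · rfl

theorem integral_model_of_one_le (hp : p ≠ 0) (hl : -1 < l)
    (hf : ∀ s, 0 ≤ s → f s = if s ≤ 1 then s ^ l else s ^ (p - 1) * log s + 1)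
    {s : ℝ} (hs : 1 ≤ s) :
    ∫ t in (0 : ℝ)..s, f t =
      1 / (l + 1) + (s ^ p * log s / p - s ^ p / p ^ 2 + s) - (1 - 1 / p ^ 2) := by
  have hlow := eqOn_rpow_of_model hf
  have hhigh : EqOn f (fun t => t ^ (p - 1) * log t + 1) (uIcc 1 s) :=
    (eqOn_rpow_mul_log_add_one_of_model hf).mono (by rw [uIcc_of_le hs]; exact Icc_subset_Ici_self)
  have hint_low : IntervalIntegrable f MeasureTheory.volume 0 1 :=
    (intervalIntegrable_congr (hlow.mono uIoc_subset_uIcc)).mpr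
      (intervalIntegral.intervalIntegrable_rpow' hl)
  have hint_high : IntervalIntegrable f MeasureTheory.volume 1 s :=
    (intervalIntegrable_congr (hhigh.mono uIoc_subset_uIcc)).mpr
      (((continuousOn_rpow_mul_log_add_one p).mono fun t ht =>
        lt_of_lt_of_le one_pos (by rw [uIcc_of_le hs] at ht; exact ht.1)).intervalIntegrable)
  rw [← intervalIntegral.integral_add_adjacent_intervals hint_low hint_high,
    intervalIntegral.integral_congr hlow, intervalIntegral.integral_congr hhigh,
    integral_rpow (Or.inl hl), integral_rpow_mul_log_add_one hp one_pos (by linarith),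
    zero_rpow (by linarith)]
  simp only [one_rpow, log_one]
  ring

theorem model_mul_self_of_one_le
    (hf : ∀ s, 0 ≤ s → f s = if s ≤ 1 then s ^ l else s ^ (p - 1) * log s + 1)
    {s : ℝ} (hs : 1 ≤ s) : f s * s = s ^ p * log s + s := by
  rw [eqOn_rpow_mul_log_add_one_of_model hf hs, add_mul, one_mul, mul_right_comm,
    ← rpow_add_one (by positivity), sub_add_cancel]

end ModelNonlinearity

theorem rpow_mul_log_add_lt_of_le_log {p β A s : ℝ} (hp : 1 < p) (hβ : p < β) (hA : 0 ≤ A)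
    (hs : 1 ≤ s) (hlog : β + 1 + β / p ^ 2 ≤ (β - p) / p * log s) :
    s ^ p * log s + s <
      β * (A + (s ^ p * log s / p - s ^ p / p ^ 2 + s) - (1 - 1 / p ^ 2)) := by
  have hp0 : 0 < p := by linarith
  have hlead : β + 1 ≤ s ^ p * ((β - p) / p * log s - β / p ^ 2) :=
    (by linarith : β + 1 ≤ (β - p) / p * log s - β / p ^ 2).trans
      (le_mul_of_one_le_left (by linarith) (one_le_rpow hs hp0.le))
  have hdiff : β * (A + (s ^ p * log s / p - s ^ p / p ^ 2 + s) - (1 - 1 / p ^ 2)) -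
      (s ^ p * log s + s) =
      β * A + s ^ p * ((β - p) / p * log s - β / p ^ 2) + (β - 1) * s - β + β / p ^ 2 := by
    field_simp
    ring
  have hβA : 0 ≤ β * A := mul_nonneg (by linarith) hA
  have hβs : 0 ≤ (β - 1) * s := mul_nonneg (by linarith) (by linarith)
  have hβp : 0 < β / p ^ 2 := div_pos (by linarith) (by positivity)
  linarith

/-- The model nonlinearity `f₂(s) = s^l` for `0 ≤ s ≤ 1`,
`f₂(s) = s^(p-1) * log s + 1` for `s > 1`, does not satisfy the
Ambrosetti–Rabinowitz condition: for every `β > p` and `M > 0` there is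
`s ≥ M` with `β * F s > f s * s`. -/
theorem statement2 (p l : ℝ) (hp : 1 < p) (hl : 1 < l)
    (f F : ℝ → ℝ)
    (hf : ∀ s, 0 ≤ s → f s = if s ≤ 1 then s ^ l else s ^ (p - 1) * Real.log s + 1)
    (hF : ∀ s, F s = ∫ t in (0:ℝ)..s, f t) :
    ∀ β, p < β → ∀ M, 0 < M → ∃ s, M ≤ s ∧ β * F s > f s * s := by
  intro β hβ M _
  have hp0 : 0 < p := by linarith
  have hlog : ∀ᶠ s in Filter.atTop, β + 1 + β / p ^ 2 ≤ (β - p) / p * log s :=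
    (tendsto_log_atTop.const_mul_atTop (by apply div_pos <;> linarith)).eventually_ge_atTop _
  obtain ⟨s, hsL, hs1, hsM⟩ :=
    (hlog.and ((Filter.eventually_ge_atTop 1).and (Filter.eventually_ge_atTop M))).exists
  refine ⟨s, hsM, ?_⟩
  rw [hF, integral_model_of_one_le hp0.ne' (by linarith) hf hs1, model_mul_self_of_one_le hf hs1]
  exact rpow_mul_log_add_lt_of_le_log hp hβ (one_div_pos.mpr (by linarith)).le hs1 hsL
end

section
/- Let p > 1, μ > 0 and c₂ > 0 be real numbers, let f : [0,∞) → ℝ be continuous with f(s) ≥ 0 for all s ≥ 0, and set F(s) = ∫₀^s f(t) dt. Assume lim_{s→+∞} F(s)/s^p = +∞ and liminf_{s→+∞} (f(s)·s − p·F(s))/s^μ ≥ c₂. Then lim_{s→+∞} f(s)/s^{p−1} = +∞, i.e. f is (p−1)-superlinear at +∞. -/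
open Real Set Filter

/-!
Since `F(s)/s^p → ∞`, it suffices to show `f(s)/s^(p-1) ≥ p·F(s)/s^p` for large `s`, i.e.
`f(s)·s - p·F(s) ≥ 0`; this holds eventually because the liminf of `(f(s)·s - p·F(s))/s^μ`
is positive.
-/

/-- On `ℝ` a liminf over an unbounded-below function is the junk value `0`, so a strictly
positive liminf already forces eventual boundedness from below. -/
theorem Real.eventually_lt_of_lt_liminf {α : Type*} {l : Filter α} {u : α → ℝ} {b : ℝ}
    (hb : 0 ≤ b) (h : b < liminf u l) : ∀ᶠ x in l, b < u x := by
  have hbdd : IsBoundedUnder (· ≥ ·) l u := by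
    by_contra hu
    rw [Real.liminf_of_not_isBoundedUnder hu] at h
    linarith
  exact Filter.eventually_lt_of_lt_liminf h hbdd

theorem mul_div_rpow_le_div_rpow_sub_one {p s a b : ℝ} (hs : 0 < s) (hab : p * a ≤ b * s) :
    p * (a / s ^ p) ≤ b / s ^ (p - 1) := by
  rw [rpow_sub hs, rpow_one, div_div_eq_mul_div, ← mul_div_assoc]
  gcongr

theorem statement5_general (p μ c₂ : ℝ) (hp : 1 < p) (hc₂ : 0 < c₂)
    (f F : ℝ → ℝ)
    (hii : Filter.Tendsto (fun s : ℝ => F s / s ^ p) Filter.atTop Filter.atTop)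
    (hiii : c₂ ≤ Filter.liminf (fun s : ℝ => (f s * s - p * F s) / s ^ μ)
      Filter.atTop) :
    Filter.Tendsto (fun s : ℝ => f s / s ^ (p - 1)) Filter.atTop Filter.atTop := by
  have hpos : ∀ᶠ s in atTop, 0 < (f s * s - p * F s) / s ^ μ :=
    Real.eventually_lt_of_lt_liminf le_rfl (hc₂.trans_le hiii)
  have hkey : ∀ᶠ s in atTop, p * (F s / s ^ p) ≤ f s / s ^ (p - 1) := by
    filter_upwards [hpos, eventually_gt_atTop 0] with s hs hs0
    have := (div_pos_iff_of_pos_right (rpow_pos_of_pos hs0 μ)).mp hs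
    exact mul_div_rpow_le_div_rpow_sub_one hs0 (by linarith)
  exact tendsto_atTop_mono' _ hkey (hii.const_mul_atTop (by linarith))

/-- If `f ≥ 0` is continuous on `[0,∞)` with primitive `F`,
`F(s)/s^p → +∞` and `liminf_{s→+∞} (f(s)·s − p·F(s))/s^μ ≥ c₂ > 0`, then
`f(s)/s^(p−1) → +∞`, i.e. `f` is `(p−1)`-superlinear at `+∞`. -/
theorem statement5 (p μ c₂ : ℝ) (hp : 1 < p) (hμ : 0 < μ) (hc₂ : 0 < c₂)
    (f F : ℝ → ℝ) (hf : ContinuousOn f (Set.Ici 0))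
    (hfpos : ∀ s, 0 ≤ s → 0 ≤ f s)
    (hF : ∀ s, F s = ∫ t in (0:ℝ)..s, f t)
    (hii : Filter.Tendsto (fun s : ℝ => F s / s ^ p) Filter.atTop Filter.atTop)
    (hiii : c₂ ≤ Filter.liminf (fun s : ℝ => (f s * s - p * F s) / s ^ μ)
      Filter.atTop) :
    Filter.Tendsto (fun s : ℝ => f s / s ^ (p - 1)) Filter.atTop Filter.atTop :=
  statement5_general p μ c₂ hp hc₂ f F hii hiii
end

section
/- Let 1 < τ < p and a₀ > 0 be real numbers and let f : [0,∞) → ℝ be continuous with f(s) ≥ 0 for all s ≥ 0 and lim_{s→+∞} f(s)/s^{p−1} = +∞. Then there exists λ̃ > 0 such that λ̃·a₀·s^{τ−1} + f(s) ≥ s^{p−1} for all s ≥ 0. -/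
open Real Set Filter

/-! Superlinearity makes `f` dominate `s ^ (p - 1)` beyond some `S > 0`. On `[0, S]` the
concave term takes over: `s ^ (p - 1) = s ^ (p - τ) * s ^ (τ - 1) ≤ S ^ (p - τ) * s ^ (τ - 1)`,
so `λ̃ = S ^ (p - τ) / a₀` works. -/

theorem Filter.Tendsto.eventually_le_of_div_atTop {α : Type*} {l : Filter α} {f g : α → ℝ}
    (hg : ∀ᶠ x in l, 0 < g x) (h : Tendsto (fun x => f x / g x) l atTop) :
    ∀ᶠ x in l, g x ≤ f x := by
  filter_upwards [hg, h.eventually_ge_atTop 1] with x hgx hx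
  exact (one_le_div hgx).1 hx

theorem Real.rpow_add_le_mul_rpow {s S b c : ℝ} (hs : 0 ≤ s) (hsS : s ≤ S) (hb : 0 < b)
    (hc : 0 ≤ c) : s ^ (c + b) ≤ S ^ c * s ^ b := by
  rw [rpow_add' hs (by linarith)]
  exact mul_le_mul_of_nonneg_right (rpow_le_rpow hs hsS hc) (rpow_nonneg hs b)

theorem statement12_general (τ p a₀ : ℝ) (hτ : 1 < τ) (hτp : τ < p) (ha₀ : 0 < a₀)
    (f : ℝ → ℝ)
    (hfpos : ∀ s, 0 ≤ s → 0 ≤ f s)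
    (hsup : Filter.Tendsto (fun s : ℝ => f s / s ^ (p - 1)) Filter.atTop
      Filter.atTop) :
    ∃ lam > 0, ∀ s, 0 ≤ s → s ^ (p - 1) ≤ lam * a₀ * s ^ (τ - 1) + f s := by
  have hdom : ∀ᶠ s in atTop, s ^ (p - 1) ≤ f s :=
    hsup.eventually_le_of_div_atTop <|
      (eventually_gt_atTop 0).mono fun s hs => rpow_pos_of_pos hs _
  obtain ⟨S, hS⟩ := eventually_atTop.1 (hdom.and (eventually_gt_atTop 0))
  have hS0 : 0 < S := (hS S le_rfl).2
  refine ⟨S ^ (p - τ) / a₀, by positivity, fun s hs => ?_⟩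
  rw [div_mul_cancel₀ _ ha₀.ne']
  rcases le_total s S with hsS | hSs
  · calc s ^ (p - 1) = s ^ (p - τ + (τ - 1)) := by ring_nf
      _ ≤ S ^ (p - τ) * s ^ (τ - 1) :=
        rpow_add_le_mul_rpow hs hsS (by linarith) (by linarith)
      _ ≤ S ^ (p - τ) * s ^ (τ - 1) + f s := le_add_of_nonneg_right (hfpos s hs)
  · have : 0 ≤ S ^ (p - τ) * s ^ (τ - 1) := by positivity
    linarith [(hS s hSs).1]

/-- If `f ≥ 0` is continuous on `[0,∞)` and
`(p−1)`-superlinear at `+∞`, and `1 < τ < p`, `a₀ > 0`, then there is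
`λ̃ > 0` with `λ̃·a₀·s^(τ−1) + f(s) ≥ s^(p−1)` for all `s ≥ 0`. -/
theorem statement12 (τ p a₀ : ℝ) (hτ : 1 < τ) (hτp : τ < p) (ha₀ : 0 < a₀)
    (f : ℝ → ℝ) (hf : ContinuousOn f (Set.Ici 0))
    (hfpos : ∀ s, 0 ≤ s → 0 ≤ f s)
    (hsup : Filter.Tendsto (fun s : ℝ => f s / s ^ (p - 1)) Filter.atTop
      Filter.atTop) :
    ∃ lam > 0, ∀ s, 0 ≤ s → s ^ (p - 1) ≤ lam * a₀ * s ^ (τ - 1) + f s :=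
  statement12_general τ p a₀ hτ hτp ha₀ f hfpos hsup
end
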